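/- arXiv:0709.0096 — 11 statements merged into one kernel-verified Lean document; each statement's English description precedes it below -/
import Mathlib

section
/- If z, w are in the open unit disc of ℂ and ω is on the unit circle, then |2ωzw − (z+w)| < |2 − ω(z+w)|; equivalently, the function Φ_ω(s,p) = (2ωp − s)/(2 − ωs) maps the symmetrised bidisc G into the open unit disc. -/
/-- The symmetrised bidisc. -/
def symBidisc : Set (ℂ × ℂ) :=
  {x | ∃ z w : ℂ, ‖z‖ < 1 ∧ ‖w‖ < 1 ∧ x = (z + w, z * w)}

/-!
Multiplying `2ωzw − (z+w)` by the unimodular `ω` turns it into `2uv − (u+v)` with `u = ωz`,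
`v = ωw`, while `2 − ω(z+w) = 2 − (u+v)`; so it suffices to treat `ω = 1`. There the identity
`|2 − (u+v)|² − |2uv − (u+v)|² = 2(1 − |v|²)|1 − u|² + 2(1 − |u|²)|1 − v|²`
exhibits the difference as positive for `u, v` in the open disc.
-/

open Complex

theorem normSq_two_sub_add_sub_normSq_two_mul_mul_sub_add (u v : ℂ) :
    normSq (2 - (u + v)) - normSq (2 * u * v - (u + v)) =
      2 * (1 - normSq v) * normSq (1 - u) + 2 * (1 - normSq u) * normSq (1 - v) := by
  simp only [normSq_apply, sub_re, sub_im, add_re, add_im, mul_re, mul_im, re_ofNat, im_ofNat,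
    one_re, one_im]
  ring

theorem normSq_lt_one_of_norm_lt_one {u : ℂ} (hu : ‖u‖ < 1) : normSq u < 1 := by
  rw [normSq_eq_norm_sq]
  exact pow_lt_one₀ (norm_nonneg u) hu two_ne_zero

theorem norm_two_mul_mul_sub_add_lt {u v : ℂ} (hu : ‖u‖ < 1) (hv : ‖v‖ < 1) :
    ‖2 * u * v - (u + v)‖ < ‖2 - (u + v)‖ := by
  have h1u : 0 < normSq (1 - u) :=
    normSq_pos.2 (sub_ne_zero.2 fun h => by simp [← h] at hu)
  rw [← sq_lt_sq₀ (norm_nonneg _) (norm_nonneg _), ← normSq_eq_norm_sq, ← normSq_eq_norm_sq,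
    ← sub_pos, normSq_two_sub_add_sub_normSq_two_mul_mul_sub_add]
  exact add_pos_of_pos_of_nonneg
    (mul_pos (mul_pos two_pos (sub_pos.2 (normSq_lt_one_of_norm_lt_one hv))) h1u)
    (mul_nonneg (mul_nonneg zero_le_two (sub_pos.2 (normSq_lt_one_of_norm_lt_one hu)).le)
      (normSq_nonneg _))

theorem norm_two_mul_mul_sub_add_lt_of_norm_eq_one {z w ω : ℂ} (hz : ‖z‖ < 1) (hw : ‖w‖ < 1)
    (hω : ‖ω‖ = 1) : ‖2 * ω * (z * w) - (z + w)‖ < ‖2 - ω * (z + w)‖ := by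
  have hωmul (a : ℂ) : ‖ω * a‖ = ‖a‖ := by rw [norm_mul, hω, one_mul]
  have hrot : ω * (2 * ω * (z * w) - (z + w)) = 2 * (ω * z) * (ω * w) - (ω * z + ω * w) := by
    ring
  rw [← hωmul, hrot, mul_add]
  exact norm_two_mul_mul_sub_add_lt (by rwa [hωmul]) (by rwa [hωmul])

theorem norm_phi_lt_one_of_mem_symBidisc {ω : ℂ} (hω : ‖ω‖ = 1) {x : ℂ × ℂ}
    (hx : x ∈ symBidisc) : ‖(2 * ω * x.2 - x.1) / (2 - ω * x.1)‖ < 1 := by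
  obtain ⟨z, w, hz, hw, rfl⟩ := hx
  have h := norm_two_mul_mul_sub_add_lt_of_norm_eq_one hz hw hω
  rw [norm_div, div_lt_one ((norm_nonneg _).trans_lt h)]
  exact h

/-- If `z, w` are in the open unit disc and `ω` on the unit circle then
`|2ωzw − (z+w)| < |2 − ω(z+w)|`; equivalently `Φ_ω` maps `G` into the open unit disc. -/
theorem stmt_0 (z w ω : ℂ) (hz : ‖z‖ < 1) (hw : ‖w‖ < 1) (hω : ‖ω‖ = 1) :
    ‖2 * ω * (z * w) - (z + w)‖ < ‖2 - ω * (z + w)‖ ∧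
    ∀ x ∈ symBidisc, ‖(2 * ω * x.2 - x.1) / (2 - ω * x.1)‖ < 1 :=
  ⟨norm_two_mul_mul_sub_add_lt_of_norm_eq_one hz hw hω,
    fun _ hx => norm_phi_lt_one_of_mem_symBidisc hω hx⟩
end

section
/- For β in the open unit disc, the map φ_β(λ) = (βλ + conj(β), λ) maps the open unit disc into the symmetrised bidisc G. -/
open Polynomial in
theorem IsAlgClosed.exists_add_eq_and_mul_eq {k : Type*} [Field k] [IsAlgClosed k] (s p : k) :
    ∃ z w : k, z + w = s ∧ z * w = p := by
  obtain ⟨z, hz⟩ := IsAlgClosed.exists_root (X ^ 2 - C s * X + C p)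
    (by rw [show degree (X ^ 2 - C s * X + C p) = 2 by compute_degree!]; decide)
  refine ⟨z, s - z, by ring, ?_⟩
  simp only [IsRoot, eval_add, eval_sub, eval_mul, eval_pow, eval_C, eval_X] at hz
  linear_combination -hz

open ComplexConjugate

namespace Complex

theorem norm_sub_conj_sq_sub_norm_mul_sub_one_sq (β z : ℂ) :
    ‖z - conj β‖ ^ 2 - ‖β * z - 1‖ ^ 2 = (‖z‖ ^ 2 - 1) * (1 - ‖β‖ ^ 2) := by
  simp only [Complex.sq_norm, normSq_apply, sub_re, sub_im, mul_re, mul_im, conj_re, conj_im,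
    one_re, one_im]
  ring

theorem norm_mul_sub_one_le_norm_sub_conj {β z : ℂ} (hβ : ‖β‖ < 1) (hz : 1 ≤ ‖z‖) :
    ‖β * z - 1‖ ≤ ‖z - conj β‖ := by
  have hnonneg : 0 ≤ (‖z‖ ^ 2 - 1) * (1 - ‖β‖ ^ 2) :=
    mul_nonneg (by nlinarith) (by nlinarith [norm_nonneg β])
  refine le_of_sq_le_sq ?_ (norm_nonneg _)
  linarith [norm_sub_conj_sq_sub_norm_mul_sub_one_sq β z]

theorem norm_lt_one_of_mul_sub_conj_eq {β l z : ℂ} (hβ : ‖β‖ < 1) (hl : ‖l‖ < 1)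
    (heq : z * (z - conj β) = l * (β * z - 1)) : ‖z‖ < 1 := by
  by_contra! hz
  have hpos : 0 < ‖z - conj β‖ :=
    lt_of_lt_of_le (by rw [norm_conj]; linarith) (norm_sub_norm_le z (conj β))
  have := calc
    ‖z - conj β‖ ≤ ‖z‖ * ‖z - conj β‖ := le_mul_of_one_le_left hpos.le hz
    _ = ‖l‖ * ‖β * z - 1‖ := by rw [← norm_mul, ← norm_mul, heq]
    _ ≤ ‖l‖ * ‖z - conj β‖ := by gcongr; exact norm_mul_sub_one_le_norm_sub_conj hβ hz
    _ < ‖z - conj β‖ := mul_lt_of_lt_one_left hpos hl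
  exact lt_irrefl _ this

end Complex

/-- For `β` in the open unit disc, `φ_β(λ) = (βλ + conj β, λ)` maps the disc into `G`. -/
theorem stmt_3 (β l : ℂ) (hβ : ‖β‖ < 1) (hl : ‖l‖ < 1) :
    (β * l + (starRingEnd ℂ) β, l) ∈ symBidisc := by
  obtain ⟨z, w, hsum, hprod⟩ := IsAlgClosed.exists_add_eq_and_mul_eq (β * l + conj β) l
  refine ⟨z, w, ?_, ?_, by rw [hsum, hprod]⟩
  · exact Complex.norm_lt_one_of_mul_sub_conj_eq hβ hl
      (by linear_combination z * hsum - hprod)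
  · exact Complex.norm_lt_one_of_mul_sub_conj_eq hβ hl
      (by linear_combination w * hsum - hprod)
end

section
/- Each point of the symmetrised bidisc G lies on exactly one flat geodesic: for every (s,p) ∈ G there is a unique β in the open unit disc such that s = βp + conj(β). -/
/-!
Conjugating `s = β p + conj β` and eliminating `conj β` gives `β (1 - |p|²) = conj s - s conj p`,
so for `|p| < 1` the only candidate is `β = (conj s - s conj p) / (1 - |p|²)`, and it is a solution.
For `(s, p) = (z + w, z w)` the numerator is `conj z (1 - |w|²) + conj w (1 - |z|²)`, whose norm is
below `1 - |z w|²` because the difference of the two bounds factors as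
`(1 - |z|)(1 - |w|)(1 - |z||w|)`.
-/

open ComplexConjugate

namespace Complex

theorem norm_one_sub_mul_conj_self {w : ℂ} (hw : ‖w‖ ≤ 1) :
    ‖1 - w * conj w‖ = 1 - ‖w‖ ^ 2 := by
  have hsq : ‖w‖ ^ 2 ≤ 1 := pow_le_one₀ (norm_nonneg w) hw
  rw [mul_conj', ← ofReal_pow, ← ofReal_one, ← ofReal_sub, norm_real,
    Real.norm_of_nonneg (sub_nonneg.mpr hsq)]

theorem one_sub_mul_conj_self_ne_zero {p : ℂ} (hp : ‖p‖ ≠ 1) : 1 - p * conj p ≠ 0 := by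
  rw [mul_conj', sub_ne_zero, ne_comm]
  exact_mod_cast (pow_eq_one_iff_of_nonneg (norm_nonneg p) two_ne_zero).not.mpr hp

theorem eq_mul_add_conj_iff {s p β : ℂ} (hp : ‖p‖ ≠ 1) :
    s = β * p + conj β ↔ β = (conj s - s * conj p) / (1 - p * conj p) := by
  have hd := one_sub_mul_conj_self_ne_zero hp
  rw [eq_div_iff hd]
  constructor
  · intro h
    have hc : conj s = conj β * conj p + β := by simpa using congrArg conj h
    linear_combination (-1 : ℂ) * hc + conj p * h
  · intro h
    have hc : conj β * (1 - p * conj p) = s - conj s * p := by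
      simpa [mul_comm] using congrArg conj h
    refine mul_left_cancel₀ hd ?_
    linear_combination (-1 : ℂ) * hc - p * h

end Complex

theorem mul_one_sub_sq_add_mul_one_sub_sq_lt {a b : ℝ} (ha₀ : 0 ≤ a) (ha : a < 1)
    (hb : b < 1) :
    a * (1 - b ^ 2) + b * (1 - a ^ 2) < 1 - (a * b) ^ 2 := by
  have hab : a * b < 1 := by nlinarith
  have hpos : 0 < (1 - a) * (1 - b) * (1 - a * b) := by
    have := sub_pos.mpr ha; have := sub_pos.mpr hb; have := sub_pos.mpr hab; positivity
  linear_combination hpos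

namespace symBidisc

open Complex

theorem norm_snd_lt_one {s p : ℂ} (h : (s, p) ∈ symBidisc) : ‖p‖ < 1 := by
  obtain ⟨z, w, hz, hw, hx⟩ := h
  obtain ⟨-, rfl⟩ := Prod.ext_iff.mp hx
  rw [norm_mul]
  exact mul_lt_one_of_nonneg_of_lt_one_left (norm_nonneg z) hz hw.le

theorem norm_conj_fst_sub_lt {s p : ℂ} (h : (s, p) ∈ symBidisc) :
    ‖conj s - s * conj p‖ < 1 - ‖p‖ ^ 2 := by
  obtain ⟨z, w, hz, hw, hx⟩ := h
  obtain ⟨rfl, rfl⟩ := Prod.ext_iff.mp hx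
  have hnum : conj (z + w) - (z + w) * conj (z * w)
      = conj z * (1 - w * conj w) + conj w * (1 - z * conj z) := by
    simp only [map_add, map_mul]; ring
  calc ‖conj (z + w) - (z + w) * conj (z * w)‖
      ≤ ‖z‖ * (1 - ‖w‖ ^ 2) + ‖w‖ * (1 - ‖z‖ ^ 2) := by
        rw [hnum]
        refine (norm_add_le _ _).trans_eq ?_
        rw [norm_mul, norm_mul, RCLike.norm_conj, RCLike.norm_conj,
          norm_one_sub_mul_conj_self hw.le, norm_one_sub_mul_conj_self hz.le]
    _ < 1 - ‖z * w‖ ^ 2 := by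
        rw [norm_mul]
        exact mul_one_sub_sq_add_mul_one_sub_sq_lt (norm_nonneg z) hz hw

end symBidisc

/-- Each point of `G` lies on exactly one flat geodesic: for every `(s,p) ∈ G` there is a
unique `β` in the open unit disc with `s = βp + conj β`. -/
theorem stmt_4 (s p : ℂ) (h : (s, p) ∈ symBidisc) :
    ∃! β : ℂ, ‖β‖ < 1 ∧ s = β * p + (starRingEnd ℂ) β := by
  have hp := symBidisc.norm_snd_lt_one h
  have hd : 0 < 1 - ‖p‖ ^ 2 := sub_pos.mpr (pow_lt_one₀ (norm_nonneg p) hp two_ne_zero)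
  refine ⟨_, ⟨?_, (Complex.eq_mul_add_conj_iff hp.ne).2 rfl⟩,
    fun β hβ => (Complex.eq_mul_add_conj_iff hp.ne).1 hβ.2⟩
  rw [norm_div, Complex.norm_one_sub_mul_conj_self hp.le, div_lt_one hd]
  exact symBidisc.norm_conj_fst_sub_lt h
end

section
/- Every flat geodesic of G meets the royal variety exactly once: for each β in the open unit disc there is a unique λ in the open unit disc with (βλ + conj(β), λ) of the form (2z, z²) for some z ∈ 𝔻. -/
/-! The points of the royal variety on `F_β` are `λ = z²` with `z ∈ 𝔻` a root of
`β z² - 2 z + conj β`. If `z₁ ≠ z₂` were two such roots, subtracting the equations would give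
`β (z₁ + z₂) = 2`, impossible as `‖β (z₁ + z₂)‖ < 2`. A root in the disc is
`z = conj β / (1 + √(1 - |β|²))`, the smaller root `(1 - √(1 - |β|²)) / β` written so that it
also makes sense at `β = 0`. -/

open ComplexConjugate

namespace FlatGeodesic

theorem eq_of_quadratic_eq_of_norm_lt_one {β c z₁ z₂ : ℂ} (hβ : ‖β‖ ≤ 1)
    (hz₁ : ‖z₁‖ < 1) (hz₂ : ‖z₂‖ < 1)
    (e₁ : β * z₁ ^ 2 + c = 2 * z₁) (e₂ : β * z₂ ^ 2 + c = 2 * z₂) : z₁ = z₂ := by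
  have hfactor : (z₁ - z₂) * (β * (z₁ + z₂) - 2) = 0 := by linear_combination e₁ - e₂
  refine sub_eq_zero.1 ((mul_eq_zero.1 hfactor).resolve_right fun h ↦ ?_)
  have hnorm : ‖β * (z₁ + z₂)‖ < 2 :=
    calc ‖β * (z₁ + z₂)‖ ≤ 1 * (‖z₁‖ + ‖z₂‖) := by
          rw [norm_mul]; gcongr; exact norm_add_le z₁ z₂
      _ < 2 := by linarith
  rw [sub_eq_zero.1 h] at hnorm
  norm_num at hnorm

noncomputable def royalRoot (β : ℂ) : ℂ :=
  conj β / (1 + Real.sqrt (1 - ‖β‖ ^ 2))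

theorem norm_royalRoot_lt_one {β : ℂ} (hβ : ‖β‖ < 1) : ‖royalRoot β‖ < 1 := by
  have hsqrt := Real.sqrt_nonneg (1 - ‖β‖ ^ 2)
  have hden : ‖(1 : ℂ) + Real.sqrt (1 - ‖β‖ ^ 2)‖ = 1 + Real.sqrt (1 - ‖β‖ ^ 2) := by
    norm_cast
    rw [Real.norm_eq_abs, abs_of_nonneg (by positivity)]
  rw [royalRoot, norm_div, Complex.norm_conj, hden, div_lt_one (by positivity)]
  linarith

theorem royalRoot_eq {β : ℂ} (hβ : ‖β‖ ≤ 1) :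
    β * royalRoot β ^ 2 + conj β = 2 * royalRoot β := by
  rw [royalRoot]
  set t := Real.sqrt (1 - ‖β‖ ^ 2)
  have ht : (t : ℂ) ^ 2 = 1 - β * conj β := by
    rw [Complex.mul_conj, Complex.normSq_eq_norm_sq]
    exact_mod_cast Real.sq_sqrt (by nlinarith [norm_nonneg β])
  have hden : (1 : ℂ) + t ≠ 0 := by exact_mod_cast (by positivity : (0 : ℝ) < 1 + t).ne'
  field_simp
  linear_combination conj β * ht

end FlatGeodesic

open FlatGeodesic in
/-- Every flat geodesic of `G` meets the royal variety exactly once: for `β` in the open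
unit disc there is a unique `λ ∈ 𝔻` with `(βλ + conj β, λ) = (2z, z²)` for some `z ∈ 𝔻`. -/
theorem stmt_5 (β : ℂ) (hβ : ‖β‖ < 1) :
    ∃! l : ℂ, ‖l‖ < 1 ∧ ∃ z : ℂ, ‖z‖ < 1 ∧
      (β * l + (starRingEnd ℂ) β, l) = (2 * z, z ^ 2) := by
  have hroot := norm_royalRoot_lt_one hβ
  refine ⟨royalRoot β ^ 2, ⟨?_, royalRoot β, hroot, ?_⟩, ?_⟩
  · rw [norm_pow]
    exact pow_lt_one₀ (norm_nonneg _) hroot two_ne_zero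
  · rw [royalRoot_eq hβ.le]
  · rintro l ⟨-, w, hw, he⟩
    obtain ⟨hw_eq, rfl⟩ := Prod.mk.inj he
    rw [eq_of_quadratic_eq_of_norm_lt_one hβ.le hw hroot hw_eq (royalRoot_eq hβ.le)]
end

section
/- For ω on the unit circle and β in the open unit disc, the composition λ ↦ Φ_ω(βλ + conj(β), λ) equals λ ↦ τ·(λ − α)/(1 − conj(α)λ) where α = conj(β)/(2ω − β) has |α| < 1 and τ = (2ω − β)/(2 − ω·conj(β)) has |τ| = 1. In particular Φ_ω restricted to any flat geodesic is an automorphism of the disc. -/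
/-- `Φ_ω` restricted to a flat geodesic is a Möbius automorphism of the disc:
`Φ_ω(βλ + conj β, λ) = τ (λ − α)/(1 − conj α · λ)` with `|α| < 1`, `|τ| = 1`. -/
theorem stmt_6 (ω β : ℂ) (hω : ‖ω‖ = 1) (hβ : ‖β‖ < 1) :
    ‖(starRingEnd ℂ) β / (2 * ω - β)‖ < 1 ∧
    ‖(2 * ω - β) / (2 - ω * (starRingEnd ℂ) β)‖ = 1 ∧
    ∀ l : ℂ, ‖l‖ < 1 →
      (2 * ω * l - (β * l + (starRingEnd ℂ) β)) / (2 - ω * (β * l + (starRingEnd ℂ) β)) =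
        (2 * ω - β) / (2 - ω * (starRingEnd ℂ) β) *
          ((l - (starRingEnd ℂ) β / (2 * ω - β)) /
            (1 - (starRingEnd ℂ) ((starRingEnd ℂ) β / (2 * ω - β)) * l)) := by
  have hβ0 : (0:ℝ) ≤ ‖β‖ := norm_nonneg _
  have hωne : ω ≠ 0 := by
    intro h; rw [h, norm_zero] at hω; norm_num at hω
  have hω1 : (starRingEnd ℂ) ω * ω = 1 := by
    rw [Complex.conj_mul', hω]
    norm_num
  have h1 : (1:ℝ) < ‖2 * ω - β‖ := by
    have h := norm_sub_norm_le (2 * ω) β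
    have : ‖(2:ℂ) * ω‖ = 2 := by simp [hω]
    linarith
  have h2 : 2 * ω - β ≠ 0 := by
    intro h; rw [h, norm_zero] at h1; linarith
  have key : 2 - ω * (starRingEnd ℂ) β = ω * (starRingEnd ℂ) (2 * ω - β) := by
    rw [map_sub, map_mul, Complex.conj_ofNat]
    linear_combination (-2 : ℂ) * hω1
  have hkn : ‖2 - ω * (starRingEnd ℂ) β‖ = ‖2 * ω - β‖ := by
    rw [key, norm_mul, hω, one_mul, RCLike.norm_conj]
  refine ⟨?_, ?_, ?_⟩
  · rw [norm_div, RCLike.norm_conj, div_lt_one (by linarith)]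
    linarith
  · rw [norm_div, hkn, div_self (by linarith)]
  · intro l hl
    have h3 : 2 - ω * (starRingEnd ℂ) β ≠ 0 := by
      intro h; rw [h, norm_zero] at hkn; linarith
    have h4 : 2 - ω * (β * l + (starRingEnd ℂ) β) ≠ 0 := by
      intro h
      have hb : ‖ω * (β * l + (starRingEnd ℂ) β)‖ < 2 := by
        calc ‖ω * (β * l + (starRingEnd ℂ) β)‖
            ≤ ‖β * l‖ + ‖(starRingEnd ℂ) β‖ := by
              rw [norm_mul, hω, one_mul]; exact norm_add_le _ _
          _ = ‖β‖ * ‖l‖ + ‖β‖ := by rw [norm_mul, RCLike.norm_conj]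
          _ < 2 := by nlinarith [norm_nonneg l]
      have : (2:ℂ) = ω * (β * l + (starRingEnd ℂ) β) := by
        linear_combination h
      rw [← this] at hb
      norm_num at hb
    have hconjα : (starRingEnd ℂ) ((starRingEnd ℂ) β / (2 * ω - β)) =
        β * ω / (2 - ω * (starRingEnd ℂ) β) := by
      rw [map_div₀, Complex.conj_conj, key]
      rw [mul_comm ω, mul_div_mul_right _ _ hωne]
    have h5 : 2 - ω * (starRingEnd ℂ) β - β * ω * l ≠ 0 := by
      intro h
      have hb : ‖β * ω * l‖ < 1 := by
        rw [norm_mul, norm_mul, hω, mul_one]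
        nlinarith [norm_nonneg l, norm_nonneg β]
      have : (2:ℂ) - ω * (starRingEnd ℂ) β = β * ω * l := by linear_combination h
      rw [this] at hkn
      linarith
    rw [hconjα]
    field_simp
    ring
end

section
/- Every Möbius automorphism m of the open unit disc induces a well-defined bijective self-map τ(m) of the symmetrised bidisc G by τ(m)(z+w, zw) = (m(z)+m(w), m(z)m(w)), and the assignment m ↦ τ(m) is an injective group homomorphism from Aut(𝔻) to the group of bijections of G. -/
/-- Möbius automorphisms of the open unit disc. -/
def IsMobius (m : ℂ → ℂ) : Prop :=
  ∃ ω a : ℂ, ‖ω‖ = 1 ∧ ‖a‖ < 1 ∧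
    ∀ l : ℂ, ‖l‖ < 1 → m l = ω * (l - a) / (1 - (starRingEnd ℂ) a * l)

/-!
Over an integral domain, `z + w` and `z w` determine `z` and `w` up to order (both are roots of
`t² - (z + w) t + z w`), so any map `m` descends along `(z, w) ↦ (z + w, z w)` to a map `τ(m)`.
Descent is compatible with composition, so a bijection `m` of the disc with inverse `m'` induces
a bijection `τ(m)` of `G` with inverse `τ(m')`. A Möbius map is such a bijection: the identity
`|1 - ā l|² - |l - a|² = (1 - |a|²)(1 - |l|²)` keeps the disc invariant, and the inverse of the
map with parameters `(ω, a)` is the one with parameters `(ω̄, -ω a)`. Injectivity of `m ↦ τ(m)` is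
read off the diagonal `z = w`.
-/

open Set Metric Function ComplexConjugate

section SymmetricPairs

variable {R S : Type*} [CommRing R] [NoZeroDivisors R] [CommRing S]

def symPair {T : Type*} [Add T] [Mul T] (p : T × T) : T × T := (p.1 + p.2, p.1 * p.2)

lemma eq_or_eq_swap_of_symPair_eq {z w z' w' : R} (h : symPair (z, w) = symPair (z', w')) :
    (z, w) = (z', w') ∨ (z, w) = (w', z') := by
  simp only [symPair, Prod.mk.injEq] at h ⊢
  obtain ⟨hs, hp⟩ := h
  have key : (z - z') * (z - w') = 0 := by linear_combination z * hs - hp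
  rcases mul_eq_zero.1 key with h | h
  · exact Or.inl ⟨by linear_combination h, by linear_combination hs - h⟩
  · exact Or.inr ⟨by linear_combination h, by linear_combination hs - h⟩

lemma factorsThrough_symPair (m : R → S) :
    (symPair ∘ Prod.map m m).FactorsThrough symPair := by
  rintro ⟨z, w⟩ ⟨z', w'⟩ h
  rcases eq_or_eq_swap_of_symPair_eq h with h | h <;> rw [h]
  simp only [comp_apply, symPair, Prod.map_fst, Prod.map_snd, add_comm, mul_comm]

-- The default `0` is used only off the range of `symPair`, and `symPair` is onto over `ℂ`.
noncomputable def symLift (m : R → S) : R × R → S × S :=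
  extend symPair (symPair ∘ Prod.map m m) fun _ => 0

lemma symLift_add_mul (m : R → S) (z w : R) :
    symLift m (z + w, z * w) = (m z + m w, m z * m w) :=
  (factorsThrough_symPair m).extend_apply _ (z, w)

variable {m : R → S} {s : Set R} {t : Set S}

lemma Set.MapsTo.symLift (h : MapsTo m s t) :
    MapsTo (symLift m) (symPair '' s ×ˢ s) (symPair '' t ×ˢ t) := by
  rintro _ ⟨⟨z, w⟩, ⟨hz, hw⟩, rfl⟩
  exact ⟨(m z, m w), ⟨h hz, h hw⟩, (symLift_add_mul m z w).symm⟩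

variable [NoZeroDivisors S] {m' : S → R}

lemma Set.LeftInvOn.symLift (h : LeftInvOn m' m s) :
    LeftInvOn (symLift m') (symLift m) (symPair '' s ×ˢ s) := by
  rintro _ ⟨⟨z, w⟩, ⟨hz, hw⟩, rfl⟩
  simp only [symPair, symLift_add_mul, h hz, h hw]

lemma Set.InvOn.symLift (h : InvOn m' m s t) :
    InvOn (symLift m') (symLift m) (symPair '' s ×ˢ s) (symPair '' t ×ˢ t) :=
  ⟨h.1.symLift, h.2.symLift⟩

lemma Set.BijOn.symLift (h : BijOn m s t) :
    BijOn (symLift m) (symPair '' s ×ˢ s) (symPair '' t ×ˢ t) :=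
  h.invOn_invFunOn.symLift.bijOn h.mapsTo.symLift h.surjOn.mapsTo_invFunOn.symLift

end SymmetricPairs

section Mobius

variable {ω a l : ℂ}

noncomputable def mobius (ω a l : ℂ) : ℂ := ω * (l - a) / (1 - conj a * l)

lemma one_sub_conj_mul_ne_zero (ha : ‖a‖ < 1) (hl : ‖l‖ < 1) : 1 - conj a * l ≠ 0 := by
  have : ‖conj a * l‖ < 1 := by
    rw [norm_mul, RCLike.norm_conj]
    nlinarith [norm_nonneg a, norm_nonneg l]
  intro h
  rw [← sub_eq_zero.1 h, norm_one] at this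
  exact this.false

lemma normSq_one_sub_conj_mul_sub_normSq_sub (a l : ℂ) :
    Complex.normSq (1 - conj a * l) - Complex.normSq (l - a) =
      (1 - Complex.normSq a) * (1 - Complex.normSq l) := by
  simp only [Complex.normSq_apply, Complex.sub_re, Complex.sub_im, Complex.mul_re,
    Complex.mul_im, Complex.conj_re, Complex.conj_im, Complex.one_re, Complex.one_im]
  ring

lemma norm_mobius_lt_one (hω : ‖ω‖ = 1) (ha : ‖a‖ < 1) (hl : ‖l‖ < 1) :
    ‖mobius ω a l‖ < 1 := by
  have hsq := normSq_one_sub_conj_mul_sub_normSq_sub a l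
  simp only [Complex.normSq_eq_norm_sq] at hsq
  have hlt : ‖l - a‖ ^ 2 < ‖1 - conj a * l‖ ^ 2 := by
    nlinarith [mul_pos (by nlinarith [norm_nonneg a] : 0 < 1 - ‖a‖ ^ 2)
      (by nlinarith [norm_nonneg l] : 0 < 1 - ‖l‖ ^ 2)]
  rw [mobius, norm_div, norm_mul, hω, one_mul,
    div_lt_one (norm_pos_iff.2 (one_sub_conj_mul_ne_zero ha hl))]
  exact lt_of_pow_lt_pow_left₀ 2 (norm_nonneg _) hlt

lemma conj_mul_self_of_norm_eq_one (hω : ‖ω‖ = 1) : conj ω * ω = 1 := by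
  rw [Complex.conj_mul', hω, Complex.ofReal_one, one_pow]

lemma norm_neg_mul_lt_one (hω : ‖ω‖ = 1) (ha : ‖a‖ < 1) : ‖-(ω * a)‖ < 1 := by
  rwa [norm_neg, norm_mul, hω, one_mul]

lemma mobius_conj_neg_mul_mobius (hω : ‖ω‖ = 1) (ha : ‖a‖ < 1) (hl : ‖l‖ < 1) :
    mobius (conj ω) (-(ω * a)) (mobius ω a l) = l := by
  have hd : 1 - l * conj a ≠ 0 := by rw [mul_comm]; exact one_sub_conj_mul_ne_zero ha hl
  have hd' := one_sub_conj_mul_ne_zero ha ha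
  have hω' := conj_mul_self_of_norm_eq_one hω
  simp only [mobius, map_neg, map_mul]
  field_simp
  rw [hω', one_mul, one_mul, div_eq_iff (by convert hd' using 1; ring)]
  ring

lemma mobius_mobius_conj_neg_mul (hω : ‖ω‖ = 1) (ha : ‖a‖ < 1) (hl : ‖l‖ < 1) :
    mobius ω a (mobius (conj ω) (-(ω * a)) l) = l := by
  have h := mobius_conj_neg_mul_mobius ((RCLike.norm_conj ω).trans hω)
    (norm_neg_mul_lt_one hω ha) hl
  rwa [Complex.conj_conj, mul_neg, neg_neg, ← mul_assoc, conj_mul_self_of_norm_eq_one hω,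
    one_mul] at h

lemma invOn_mobius (hω : ‖ω‖ = 1) (ha : ‖a‖ < 1) :
    InvOn (mobius (conj ω) (-(ω * a))) (mobius ω a) (ball 0 1) (ball 0 1) :=
  ⟨fun _ hl ↦ mobius_conj_neg_mul_mobius hω ha (mem_ball_zero_iff.1 hl),
    fun _ hl ↦ mobius_mobius_conj_neg_mul hω ha (mem_ball_zero_iff.1 hl)⟩

lemma mapsTo_mobius (hω : ‖ω‖ = 1) (ha : ‖a‖ < 1) :
    MapsTo (mobius ω a) (ball 0 1) (ball 0 1) := fun _ hl ↦
  mem_ball_zero_iff.2 (norm_mobius_lt_one hω ha (mem_ball_zero_iff.1 hl))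

lemma bijOn_mobius (hω : ‖ω‖ = 1) (ha : ‖a‖ < 1) :
    BijOn (mobius ω a) (ball 0 1) (ball 0 1) :=
  (invOn_mobius hω ha).bijOn (mapsTo_mobius hω ha)
    (mapsTo_mobius ((RCLike.norm_conj ω).trans hω) (norm_neg_mul_lt_one hω ha))

end Mobius

lemma IsMobius.bijOn {m : ℂ → ℂ} (hm : IsMobius m) : BijOn m (ball 0 1) (ball 0 1) := by
  obtain ⟨ω, a, hω, ha, hm⟩ := hm
  exact (bijOn_mobius hω ha).congr fun l hl ↦ (hm l (mem_ball_zero_iff.1 hl)).symm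

lemma IsMobius.norm_apply_lt_one {m : ℂ → ℂ} (hm : IsMobius m) {l : ℂ} (hl : ‖l‖ < 1) :
    ‖m l‖ < 1 :=
  mem_ball_zero_iff.1 (hm.bijOn.mapsTo (mem_ball_zero_iff.2 hl))

lemma symBidisc_eq_image_symPair : symBidisc = symPair '' (ball 0 1 ×ˢ ball 0 1) := by
  ext x
  simp [symBidisc, symPair, eq_comm, and_assoc]

/-- Every Möbius automorphism `m` of `𝔻` induces a well-defined bijective self-map `τ(m)` of
the symmetrised bidisc, `τ(m)(z+w, zw) = (m z + m w, m z · m w)`, and `m ↦ τ(m)` is an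
injective group homomorphism from `Aut 𝔻` to the bijections of `G`. -/
theorem stmt_8 :
    -- well-definedness: the value depends only on (z+w, zw)
    (∀ m : ℂ → ℂ, IsMobius m → ∀ z w z' w' : ℂ, ‖z‖ < 1 → ‖w‖ < 1 → ‖z'‖ < 1 → ‖w'‖ < 1 →
      z + w = z' + w' → z * w = z' * w' →
      (m z + m w, m z * m w) = (m z' + m w', m z' * m w')) ∧
    -- τ(m) is a bijective self-map of G
    (∀ m : ℂ → ℂ, IsMobius m → ∃ F : ℂ × ℂ → ℂ × ℂ,
      (∀ z w : ℂ, ‖z‖ < 1 → ‖w‖ < 1 → F (z + w, z * w) = (m z + m w, m z * m w)) ∧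
      Set.BijOn F symBidisc symBidisc) ∧
    -- m ↦ τ(m) is a homomorphism: τ(m₁ ∘ m₂) agrees with τ(m₁) ∘ τ(m₂) on G
    (∀ (m₁ m₂ : ℂ → ℂ) (F₁ F₂ F₁₂ : ℂ × ℂ → ℂ × ℂ), IsMobius m₁ → IsMobius m₂ →
      (∀ z w : ℂ, ‖z‖ < 1 → ‖w‖ < 1 → F₁ (z + w, z * w) = (m₁ z + m₁ w, m₁ z * m₁ w)) →
      (∀ z w : ℂ, ‖z‖ < 1 → ‖w‖ < 1 → F₂ (z + w, z * w) = (m₂ z + m₂ w, m₂ z * m₂ w)) →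
      (∀ z w : ℂ, ‖z‖ < 1 → ‖w‖ < 1 →
        F₁₂ (z + w, z * w) = (m₁ (m₂ z) + m₁ (m₂ w), m₁ (m₂ z) * m₁ (m₂ w))) →
      ∀ x ∈ symBidisc, F₁₂ x = F₁ (F₂ x)) ∧
    -- injectivity: if τ(m) is the identity on G then m is the identity on 𝔻
    (∀ m : ℂ → ℂ, IsMobius m →
      (∀ z w : ℂ, ‖z‖ < 1 → ‖w‖ < 1 → (m z + m w, m z * m w) = (z + w, z * w)) →
      ∀ l : ℂ, ‖l‖ < 1 → m l = l) := by
  refine ⟨?_, ?_, ?_, ?_⟩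
  · intro m _ z w z' w' _ _ _ _ hs hp
    exact factorsThrough_symPair m (Prod.ext hs hp : symPair (z, w) = symPair (z', w'))
  · intro m hm
    refine ⟨symLift m, fun z w _ _ ↦ symLift_add_mul m z w, ?_⟩
    rw [symBidisc_eq_image_symPair]
    exact hm.bijOn.symLift
  · rintro m₁ m₂ F₁ F₂ F₁₂ - hm₂ hF₁ hF₂ hF₁₂ _ ⟨z, w, hz, hw, rfl⟩
    rw [hF₁₂ z w hz hw, hF₂ z w hz hw,
      hF₁ _ _ (hm₂.norm_apply_lt_one hz) (hm₂.norm_apply_lt_one hw)]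
  · intro m _ hid l hl
    have h := congrArg Prod.fst (hid l l hl hl)
    linear_combination h / 2
end

section
/- A function h : Ω × Ω → ℂ on a set Ω is positive semi-definite if and only if there exists a Hilbert space E and a function F : Ω → E such that h(λ, μ) = ⟨F(λ), F(μ)⟩ for all λ, μ ∈ Ω. -/
open scoped ComplexOrder

/-- A kernel `h : Ω × Ω → ℂ` is positive semi-definite. -/
def IsPSDKernel {Ω : Type*} (h : Ω → Ω → ℂ) : Prop :=
  ∀ (n : ℕ) (s : Fin n → Ω) (c : Fin n → ℂ),
    (0 : ℂ) ≤ ∑ i, ∑ j, h (s i) (s j) * c i * (starRingEnd ℂ) (c j)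

/-!
Testing the kernel on two points with the coefficients `(1, 0), (0, 1), (1, 1), (1, i)` forces
Hermitian symmetry, so positive semi-definiteness of `h` is positive semidefiniteness of the
matrix `(λ, μ) ↦ h μ λ` over the index type `Ω`, in Mathlib's sense. Gram matrices are positive
semidefinite; conversely, Moore's construction `RKHS.OfKernel` realizes a positive semidefinite
matrix as the Gram matrix of the kernel functions of a Hilbert space.
-/

open ComplexConjugate InnerProductSpace Matrix

universe u v

namespace Matrix

theorem posSemidef_gram' (𝕜 : Type*) [RCLike 𝕜] {X E : Type*} [SeminormedAddCommGroup E]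
    [InnerProductSpace 𝕜 E] (v : X → E) : (gram 𝕜 v).PosSemidef := by
  refine ⟨isHermitian_gram 𝕜 v, fun x => ?_⟩
  have hsum : (x.sum fun i xi => x.sum fun j xj => star xi * gram 𝕜 v i j * xj) =
      ⟪x.sum fun i xi => xi • v i, x.sum fun j xj => xj • v j⟫_𝕜 := by
    simp_rw [Finsupp.sum_inner, Finsupp.inner_sum, inner_smul_left, inner_smul_right, gram_apply,
      RCLike.star_def]
    refine Finsupp.sum_congr fun i _ => Finsupp.sum_congr fun j _ => ?_
    ring
  rw [hsum, RCLike.le_iff_re_im]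
  simp

variable {𝕜 : Type u} [RCLike 𝕜] {X : Type v} {M : Matrix X X 𝕜}

theorem PosSemidef.map_algebraMap (hM : M.PosSemidef) :
    (M.map (algebraMap 𝕜 (𝕜 →L[𝕜] 𝕜))).PosSemidef := by
  have tfae := (RKHS.posSemidef_tfae (K := M.map (algebraMap 𝕜 (𝕜 →L[𝕜] 𝕜)))).out 0 2
  refine tfae.2 ⟨hM.isHermitian.map _ fun a => algebraMap_star_comm a, fun w => ?_⟩
  have hsum : (w.sum fun x a => w.sum fun y b =>
      ⟪M.map (algebraMap 𝕜 (𝕜 →L[𝕜] 𝕜)) y x a, b⟫_𝕜) =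
      w.sum fun x a => w.sum fun y b => star a * M x y * b := by
    refine Finsupp.sum_congr fun x _ => Finsupp.sum_congr fun y _ => ?_
    rw [map_apply, ContinuousLinearMap.algebraMap_apply, RCLike.inner_apply, smul_eq_mul, map_mul,
      ← hM.isHermitian.apply x y, RCLike.star_def]
    ring
  rw [hsum]
  exact (RCLike.nonneg_iff.1 (hM.2 w)).1

theorem PosSemidef.exists_gram_eq (hM : M.PosSemidef) :
    ∃ (E : Type max u v) (_ : NormedAddCommGroup E) (_ : InnerProductSpace 𝕜 E)
      (_ : CompleteSpace E) (w : X → E), gram 𝕜 w = M := by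
  have : Fact (M.map (algebraMap 𝕜 (𝕜 →L[𝕜] 𝕜))).PosSemidef := ⟨hM.map_algebraMap⟩
  refine ⟨RKHS.OfKernel (M.map (algebraMap 𝕜 (𝕜 →L[𝕜] 𝕜))), inferInstance, inferInstance,
    inferInstance, fun x => RKHS.kerFun _ x 1, ?_⟩
  ext x y
  rw [gram_apply, ← RKHS.kernel_inner, RKHS.OfKernel.kernel_ofKernel]
  simpa using hM.isHermitian.apply x y

end Matrix

namespace IsPSDKernel

variable {Ω : Type*} {h : Ω → Ω → ℂ}

theorem sum_nonneg (hp : IsPSDKernel h) {ι : Type*} [Fintype ι] (s : ι → Ω) (c : ι → ℂ) :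
    0 ≤ ∑ i, ∑ j, h (s i) (s j) * c i * conj (c j) := by
  let e := Fintype.equivFin ι
  convert hp _ (s ∘ e.symm) (c ∘ e.symm) using 1
  refine (Fintype.sum_equiv e.symm _ (fun i => ∑ j, h (s i) (s j) * c i * conj (c j))
    fun k => Fintype.sum_equiv e.symm _ (fun j => h _ (s j) * _ * conj (c j)) fun l => rfl).symm

theorem conj_apply (hp : IsPSDKernel h) (a b : Ω) : conj (h a b) = h b a := by
  have im_eq_zero (c : Fin 2 → ℂ) := (Complex.nonneg_iff.1 (hp 2 ![a, b] c)).2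
  have haa := im_eq_zero ![1, 0]
  have hbb := im_eq_zero ![0, 1]
  have h11 := im_eq_zero ![1, 1]
  have h1I := im_eq_zero ![1, Complex.I]
  simp only [Fin.sum_univ_two, Fin.isValue, cons_val_zero, cons_val_one, cons_val_fin_one, map_one,
    map_zero, mul_one, mul_zero, add_zero, zero_add, mul_neg, Complex.add_im, Complex.neg_im,
    Complex.mul_im, Complex.mul_re, Complex.conj_I, Complex.I_re, Complex.I_im, zero_sub,
    neg_neg] at haa hbb h11 h1I
  apply Complex.ext <;> simp only [Complex.conj_re, Complex.conj_im] <;> linarith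

end IsPSDKernel

theorem isPSDKernel_iff_posSemidef_transpose {Ω : Type*} {h : Ω → Ω → ℂ} :
    IsPSDKernel h ↔ (of h)ᵀ.PosSemidef := by
  constructor
  · intro hp
    refine ⟨Matrix.ext fun a b => hp.conj_apply a b, fun x => ?_⟩
    convert hp.sum_nonneg ((↑) : x.support → Ω) (fun i => x i) using 1
    simp only [Finsupp.sum, ← Finset.sum_coe_sort x.support]
    rw [Finset.sum_comm]
    exact Finset.sum_congr rfl fun i _ => Finset.sum_congr rfl fun j _ => by simp only [RCLike.star_def, transpose_apply, of_apply]; ring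
  · intro hM n s c
    convert (hM.submatrix s).dotProduct_mulVec_nonneg c using 1
    simp only [dotProduct, Pi.star_apply, RCLike.star_def, mulVec, submatrix_apply,
      transpose_apply, of_apply, Finset.mul_sum]
    rw [Finset.sum_comm]
    simp [mul_comm]

/-- Aronszajn's realization theorem: `h` is positive semi-definite iff there is a Hilbert
space `E` and `F : Ω → E` with `h(λ, μ) = ⟨F λ, F μ⟩`. -/
theorem stmt_9 {Ω : Type} (h : Ω → Ω → ℂ) :
    IsPSDKernel h ↔
      ∃ (E : Type) (_ : NormedAddCommGroup E) (_ : InnerProductSpace ℂ E)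
        (_ : CompleteSpace E) (F : Ω → E),
        ∀ lam mu : Ω, h lam mu = inner ℂ (F mu) (F lam) := by
  rw [isPSDKernel_iff_posSemidef_transpose]
  constructor
  · intro hM
    obtain ⟨E, hE, hInner, hComplete, F, hF⟩ := hM.exists_gram_eq
    exact ⟨E, hE, hInner, hComplete, F, fun lam mu => (congr_fun₂ hF mu lam).symm⟩
  · rintro ⟨E, _, _, _, F, hF⟩
    have hgram : (of h)ᵀ = gram ℂ F := Matrix.ext fun mu lam => hF lam mu
    exact hgram ▸ posSemidef_gram' ℂ F
end

section
/- A nonzero positive semi-definite function h : Ω × Ω → ℂ is an extreme direction of the convex cone of positive semi-definite functions on Ω (i.e., whenever h = h₁ + h₂ with h₁, h₂ positive semi-definite, each h_i is a nonnegative scalar multiple of h) if and only if h has the form h(λ,μ) = F(λ)·conj(F(μ)) for some function F : Ω → ℂ, i.e., h is a rank-one positive kernel. -/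
/-!
Write `Q_k(s, c) = ∑ i j, k (s i) (s j) c i conj (c j)`. If `Q_k(s, v) = 0` for a PSD kernel `k`,
testing `k` on `s` extended by a point `μ` shows `∑ i, k (s i) μ v i = 0`. For `h = F ⊗ conj F`
and a PSD summand `g` of `h`, the vector `(F μ, -F λ)` at `(λ, μ)` is `Q_h`-null, hence `Q_g`-null,
so `g λ ν F μ = g μ ν F λ`, which together with hermitian symmetry makes `g` a nonnegative multiple
of `h`. Conversely, if `h μ₀ μ₀ ≠ 0`, the rank-one kernel `h(·, μ₀) h(μ₀, ·) / h(μ₀, μ₀)` agrees with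
`h` at `(μ₀, μ₀)` and `h` minus it is PSD (its Gram form is a Schur complement), so extremality
forces the two to be equal.
-/

open scoped ComplexOrder

open ComplexConjugate

variable {Ω : Type*}

def kernelForm (k : Ω → Ω → ℂ) {n : ℕ} (s : Fin n → Ω) (c : Fin n → ℂ) : ℂ :=
  ∑ i, ∑ j, k (s i) (s j) * c i * conj (c j)

lemma kernelForm_add (k₁ k₂ : Ω → Ω → ℂ) {n : ℕ} (s : Fin n → Ω) (c : Fin n → ℂ) :
    kernelForm (k₁ + k₂) s c = kernelForm k₁ s c + kernelForm k₂ s c := by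
  simp only [kernelForm, Pi.add_apply, add_mul, Finset.sum_add_distrib]

lemma kernelForm_sub (k₁ k₂ : Ω → Ω → ℂ) {n : ℕ} (s : Fin n → Ω) (c : Fin n → ℂ) :
    kernelForm (k₁ - k₂) s c = kernelForm k₁ s c - kernelForm k₂ s c := by
  simp only [kernelForm, Pi.sub_apply, sub_mul, Finset.sum_sub_distrib]

lemma kernelForm_rankOne (F : Ω → ℂ) {n : ℕ} (s : Fin n → Ω) (c : Fin n → ℂ) :
    kernelForm (fun l m => F l * conj (F m)) s c
      = (∑ i, F (s i) * c i) * conj (∑ i, F (s i) * c i) := by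
  simp only [kernelForm, map_sum, map_mul, Finset.sum_mul_sum]
  refine Finset.sum_congr rfl fun i _ => Finset.sum_congr rfl fun j _ => ?_
  ring

lemma isPSDKernel_rankOne (F : Ω → ℂ) : IsPSDKernel fun l m => F l * conj (F m) := by
  intro n s c
  show 0 ≤ kernelForm (fun l m => F l * conj (F m)) s c
  rw [kernelForm_rankOne, Complex.mul_conj]
  exact Complex.zero_le_real.mpr (Complex.normSq_nonneg _)

namespace IsPSDKernel

variable {k : Ω → Ω → ℂ}

lemma kernelForm_nonneg (hk : IsPSDKernel k) {n : ℕ} (s : Fin n → Ω) (c : Fin n → ℂ) :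
    0 ≤ kernelForm k s c :=
  hk n s c

lemma apply_self_nonneg (hk : IsPSDKernel k) (μ : Ω) : 0 ≤ k μ μ := by
  simpa using hk 1 (fun _ => μ) (fun _ => 1)

lemma ofReal_re_apply_self (hk : IsPSDKernel k) (μ : Ω) : ((k μ μ).re : ℂ) = k μ μ :=
  Complex.ext rfl (Complex.nonneg_iff.mp (hk.apply_self_nonneg μ)).2

lemma conj_apply_s10 (hk : IsPSDKernel k) (l m : Ω) : conj (k l m) = k m l := by
  have h₁ := hk 2 ![l, m] ![1, 1]
  have hI := hk 2 ![l, m] ![1, Complex.I]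
  have hl := hk.apply_self_nonneg l
  have hm := hk.apply_self_nonneg m
  simp only [Fin.sum_univ_two, Matrix.cons_val_zero, Matrix.cons_val_one] at h₁ hI
  rw [Complex.nonneg_iff] at h₁ hI hl hm
  apply Complex.ext <;>
    simp only [mul_one, map_one, mul_neg, mul_zero, zero_sub, neg_neg, add_zero, Complex.conj_I,
      Complex.add_re, Complex.add_im, Complex.neg_re, Complex.neg_im, Complex.mul_re, Complex.mul_im,
      Complex.I_re, Complex.I_im, Complex.conj_re, Complex.conj_im] at h₁ hI ⊢ <;>
    linarith

lemma sum_apply_mul_conj (hk : IsPSDKernel k) {n : ℕ} (s : Fin n → Ω) (c : Fin n → ℂ) (μ : Ω) :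
    ∑ j, k μ (s j) * conj (c j) = conj (∑ j, k (s j) μ * c j) := by
  simp only [map_sum, map_mul, hk.conj_apply_s10]

lemma kernelForm_snoc (hk : IsPSDKernel k) {n : ℕ} (s : Fin n → Ω) (c : Fin n → ℂ) (μ : Ω)
    (a : ℂ) :
    kernelForm k (Fin.snoc s μ) (Fin.snoc c a) = kernelForm k s c
      + (∑ i, k (s i) μ * c i) * conj a + a * conj (∑ i, k (s i) μ * c i)
      + k μ μ * a * conj a := by
  rw [← hk.sum_apply_mul_conj]
  simp only [kernelForm, Fin.sum_univ_castSucc, Fin.snoc_castSucc, Fin.snoc_last,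
    Finset.sum_add_distrib, Finset.sum_mul, Finset.mul_sum]
  simp only [mul_assoc, mul_comm]
  ring

lemma sum_apply_mul_eq_zero (hk : IsPSDKernel k) {n : ℕ} {s : Fin n → Ω} {v : Fin n → ℂ}
    (hv : kernelForm k s v = 0) (μ : Ω) : ∑ i, k (s i) μ * v i = 0 := by
  set B := ∑ i, k (s i) μ * v i
  set d := (k μ μ).re
  have hd : 0 ≤ d := (Complex.nonneg_iff.mp (hk.apply_self_nonneg μ)).1
  have hform : kernelForm k (Fin.snoc s μ) (Fin.snoc v (-(B / (d + 1))))
      = ((-((d + 2) / (d + 1) ^ 2 * Complex.normSq B) : ℝ) : ℂ) := by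
    rw [hk.kernelForm_snoc, hv, ← hk.ofReal_re_apply_self]
    push_cast
    rw [Complex.normSq_eq_conj_mul_self]
    simp only [map_neg, map_div₀, map_add, map_one, Complex.conj_ofReal]
    field_simp
    ring
  have hnonneg := hk.kernelForm_nonneg (Fin.snoc s μ) (Fin.snoc v (-(B / (d + 1))))
  rw [hform, Complex.zero_le_real, neg_nonneg] at hnonneg
  have hB : Complex.normSq B ≤ 0 := nonpos_of_mul_nonpos_right hnonneg (by positivity)
  exact Complex.normSq_eq_zero.mp (le_antisymm hB (Complex.normSq_nonneg B))

lemma exists_apply_self_ne_zero (hk : IsPSDKernel k) (hne : k ≠ 0) : ∃ μ, k μ μ ≠ 0 := by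
  by_contra! hdiag
  refine hne (funext₂ fun l m => ?_)
  simpa using hk.sum_apply_mul_eq_zero (s := ![l]) (v := ![1]) (by simp [kernelForm, hdiag]) m

lemma exists_rankOne_sub (hk : IsPSDKernel k) (μ₀ : Ω) :
    ∃ F : Ω → ℂ, F μ₀ * conj (F μ₀) = k μ₀ μ₀ ∧
      IsPSDKernel (k - fun l m => F l * conj (F m)) := by
  set r := (k μ₀ μ₀).re
  have hr : 0 ≤ r := (Complex.nonneg_iff.mp (hk.apply_self_nonneg μ₀)).1
  have hd : k μ₀ μ₀ = r := (hk.ofReal_re_apply_self μ₀).symm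
  have hsqrt : ((√r : ℝ) : ℂ) * (√r : ℝ) = r := by
    rw [← Complex.ofReal_mul, Real.mul_self_sqrt hr]
  refine ⟨fun l => k l μ₀ / (√r : ℝ), ?_, fun n s c => ?_⟩
  · beta_reduce
    rw [hd, map_div₀, Complex.conj_ofReal, Complex.conj_ofReal, div_mul_div_comm, hsqrt]
    rcases hr.eq_or_lt with h0 | hpos
    · simp [← h0]
    · field_simp
  set A := ∑ i, k (s i) μ₀ * c i
  have hA : ∑ i, k (s i) μ₀ / (√r : ℝ) * c i = A / (√r : ℝ) := by
    simp only [A, Finset.sum_div, div_mul_eq_mul_div]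
  have hschur : kernelForm (k - fun l m => k l μ₀ / (√r : ℝ) * conj (k m μ₀ / (√r : ℝ))) s c
      = kernelForm k (Fin.snoc s μ₀) (Fin.snoc c (-(A / r))) := by
    rw [kernelForm_sub, kernelForm_rankOne, hk.kernelForm_snoc, hA, hd]
    simp only [map_div₀, map_neg, Complex.conj_ofReal]
    rw [div_mul_div_comm, hsqrt]
    rcases hr.eq_or_lt with h0 | hpos
    · simp [← h0]
    · field_simp
      ring
  have := hk.kernelForm_nonneg (Fin.snoc s μ₀) (Fin.snoc c (-(A / r)))
  rw [← hschur] at this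
  exact this

end IsPSDKernel

lemma exists_eq_ofReal_mul_of_rankOne_eq_add {F : Ω → ℂ} (hF : F ≠ 0) {g g' : Ω → Ω → ℂ}
    (hg : IsPSDKernel g) (hg' : IsPSDKernel g')
    (hsum : (fun l m => F l * conj (F m)) = g + g') :
    ∃ t : ℝ, 0 ≤ t ∧ g = fun l m => (t : ℂ) * (F l * conj (F m)) := by
  obtain ⟨μ₀, hμ₀⟩ : ∃ μ₀, F μ₀ ≠ 0 := by simpa [funext_iff] using hF
  have hcol : ∀ l ν, g l ν * F μ₀ = g μ₀ ν * F l := by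
    intro l ν
    have hrank : kernelForm (fun l m => F l * conj (F m)) ![l, μ₀] ![F μ₀, -F l] = 0 := by
      rw [kernelForm_rankOne]
      simp [Fin.sum_univ_two, mul_comm]
    rw [hsum, kernelForm_add] at hrank
    have hzero := ((add_eq_zero_iff_of_nonneg (hg.kernelForm_nonneg _ _)
      (hg'.kernelForm_nonneg _ _)).mp hrank).1
    have := hg.sum_apply_mul_eq_zero hzero ν
    simp only [Fin.sum_univ_two, Matrix.cons_val_zero, Matrix.cons_val_one] at this
    linear_combination this
  have hrow : ∀ ν, g μ₀ ν * conj (F μ₀) = g μ₀ μ₀ * conj (F ν) := by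
    intro ν
    simpa only [map_mul, hg.conj_apply_s10] using congrArg conj (hcol ν μ₀)
  refine ⟨(g μ₀ μ₀).re / Complex.normSq (F μ₀),
    div_nonneg (Complex.nonneg_iff.mp (hg.apply_self_nonneg μ₀)).1 (Complex.normSq_nonneg _),
    funext₂ fun l ν => ?_⟩
  have hF₀ : conj (F μ₀) ≠ 0 := by simpa using hμ₀
  push_cast
  rw [hg.ofReal_re_apply_self, Complex.normSq_eq_conj_mul_self]
  field_simp
  linear_combination conj (F μ₀) * hcol l ν + F l * hrow ν

/-- A nonzero positive semi-definite kernel is an extreme direction of the cone of positive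
semi-definite kernels iff it is a rank-one positive kernel `h(λ,μ) = F(λ) conj (F μ)`. -/
theorem stmt_10 {Ω : Type} (h : Ω → Ω → ℂ) (hPSD : IsPSDKernel h) (hne : h ≠ 0) :
    (∀ h₁ h₂ : Ω → Ω → ℂ, IsPSDKernel h₁ → IsPSDKernel h₂ →
      h = h₁ + h₂ →
      ∃ t₁ t₂ : ℝ, 0 ≤ t₁ ∧ 0 ≤ t₂ ∧
        (h₁ = fun lam mu => (t₁ : ℂ) * h lam mu) ∧
        (h₂ = fun lam mu => (t₂ : ℂ) * h lam mu)) ↔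
    ∃ F : Ω → ℂ, ∀ lam mu : Ω, h lam mu = F lam * (starRingEnd ℂ) (F mu) := by
  constructor
  · intro hext
    obtain ⟨μ₀, hμ₀⟩ := hPSD.exists_apply_self_ne_zero hne
    obtain ⟨F, hFμ₀, hsub⟩ := hPSD.exists_rankOne_sub μ₀
    obtain ⟨t, -, -, -, ht, -⟩ :=
      hext _ _ (isPSDKernel_rankOne F) hsub (add_sub_cancel _ h).symm
    have ht₁ : (t : ℂ) = 1 := by
      have := congrFun₂ ht μ₀ μ₀
      rw [hFμ₀] at this
      exact (mul_eq_right₀ hμ₀).mp this.symm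
    exact ⟨F, fun l m => by simpa [ht₁] using (congrFun₂ ht l m).symm⟩
  · rintro ⟨F, hF⟩ h₁ h₂ hp₁ hp₂ hsum
    obtain rfl : h = fun l m => F l * conj (F m) := funext₂ hF
    have hF₀ : F ≠ 0 := by
      rintro rfl
      exact hne (funext₂ fun _ _ => by simp)
    obtain ⟨t₁, ht₁, e₁⟩ := exists_eq_ofReal_mul_of_rankOne_eq_add hF₀ hp₁ hp₂ hsum
    obtain ⟨t₂, ht₂, e₂⟩ := exists_eq_ofReal_mul_of_rankOne_eq_add hF₀ hp₂ hp₁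
      (hsum.trans (add_comm _ _))
    exact ⟨t₁, t₂, ht₁, ht₂, e₁, e₂⟩
end

section
/- Let H be a 2-dimensional Hilbert space with a basis u = (u₁, u₂) of unit vectors, let x, y ∈ 𝔻 and let T be the linear operator on H with Tu₁ = x·u₁ and Tu₂ = y·u₂. Then ‖T‖ ≤ 1 if and only if |⟨u₁, u₂⟩|² ≤ 1 − ρ(x,y)², where ρ(x,y) = |x − y|/|1 − conj(y)x| is the pseudohyperbolic distance. -/
/-!
Writing `v = a u₁ + b u₂`, the defect `‖v‖² - ‖T v‖²` is the Hermitian form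
`(1 - |x|²)|a|² + (1 - |y|²)|b|² + 2 Re(ā b C)` with `C = ⟨u₁, u₂⟩ (1 - x̄ y)`, so `‖T‖ ≤ 1`
iff this 2 × 2 form is positive semidefinite, i.e. iff `|C|² ≤ (1 - |x|²)(1 - |y|²)`. The identity
`|1 - ȳ x|² - |x - y|² = (1 - |x|²)(1 - |y|²)` turns this into `|⟨u₁, u₂⟩|² ≤ 1 - ρ(x, y)²`.
-/

open ComplexConjugate

namespace Complex

theorem norm_one_sub_conj_mul_sq_sub_norm_sub_sq (x y : ℂ) :
    ‖1 - conj y * x‖ ^ 2 - ‖x - y‖ ^ 2 = (1 - ‖x‖ ^ 2) * (1 - ‖y‖ ^ 2) := by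
  simp only [Complex.sq_norm, normSq_apply, sub_re, sub_im, mul_re, mul_im, conj_re, conj_im,
    one_re, one_im]
  ring

theorem one_sub_norm_sub_div_sq (x y : ℂ) (h : 1 - conj y * x ≠ 0) :
    1 - (‖x - y‖ / ‖1 - conj y * x‖) ^ 2
      = (1 - ‖x‖ ^ 2) * (1 - ‖y‖ ^ 2) / ‖1 - conj y * x‖ ^ 2 := by
  rw [← norm_one_sub_conj_mul_sq_sub_norm_sub_sq, div_pow, sub_div, div_self (by positivity)]

theorem forall_hermitianForm_nonneg_iff {A B : ℝ} (hB : 0 < B) (C : ℂ) :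
    (∀ a b : ℂ, 0 ≤ A * ‖a‖ ^ 2 + B * ‖b‖ ^ 2 + 2 * (conj a * b * C).re) ↔ ‖C‖ ^ 2 ≤ A * B := by
  constructor
  · intro h
    -- at `(a, b) = (B, -conj C)` the form equals `B * (A * B - ‖C‖ ^ 2)`
    have hmin := h B (-conj C)
    have hre : (conj (B : ℂ) * -conj C * C).re = -(B * ‖C‖ ^ 2) := by
      rw [conj_ofReal, mul_neg, neg_mul, mul_assoc, conj_mul', ← ofReal_pow, ← ofReal_mul,
        neg_re, ofReal_re]
    rw [hre, norm_neg, norm_conj, norm_real, Real.norm_of_nonneg hB.le] at hmin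
    nlinarith
  · intro h a b
    have hre : -(‖a‖ * ‖b‖ * ‖C‖) ≤ (conj a * b * C).re := by
      have h₁ := neg_abs_le (conj a * b * C).re
      have h₂ := abs_re_le_norm (conj a * b * C)
      rw [norm_mul, norm_mul, norm_conj] at h₂
      linarith
    -- `B` times the form is at least `(B ‖b‖ - ‖a‖ ‖C‖) ^ 2 + ‖a‖ ^ 2 (A B - ‖C‖ ^ 2)`
    have hscaled : 0 ≤ B * (A * ‖a‖ ^ 2 + B * ‖b‖ ^ 2 - 2 * (‖a‖ * ‖b‖ * ‖C‖)) := by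
      nlinarith [sq_nonneg (B * ‖b‖ - ‖a‖ * ‖C‖), mul_nonneg (sq_nonneg ‖a‖) (sub_nonneg.2 h)]
    nlinarith [nonneg_of_mul_nonneg_right hscaled hB]

end Complex

theorem InnerProductSpace.norm_smul_add_smul_sq {E : Type*} [NormedAddCommGroup E]
    [InnerProductSpace ℂ E] (a b : ℂ) (u v : E) :
    ‖a • u + b • v‖ ^ 2
      = ‖a‖ ^ 2 * ‖u‖ ^ 2 + ‖b‖ ^ 2 * ‖v‖ ^ 2 + 2 * (conj a * b * inner ℂ u v).re := by
  rw [norm_add_sq (𝕜 := ℂ), inner_smul_left, inner_smul_right, norm_smul, norm_smul, mul_pow,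
    mul_pow, RCLike.re_to_complex, mul_assoc]
  ring

theorem ContinuousLinearMap.opNorm_le_one_iff_of_span_pair {𝕜 E : Type*} [RCLike 𝕜]
    [NormedAddCommGroup E] [NormedSpace 𝕜 E] {u v : E} (hspan : Submodule.span 𝕜 {u, v} = ⊤)
    (T : E →L[𝕜] E) : ‖T‖ ≤ 1 ↔ ∀ a b : 𝕜, ‖T (a • u + b • v)‖ ≤ ‖a • u + b • v‖ := by
  rw [T.opNorm_le_iff zero_le_one]
  refine ⟨fun h a b ↦ (h _).trans_eq (one_mul _), fun h w ↦ ?_⟩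
  obtain ⟨a, b, rfl⟩ := Submodule.mem_span_pair.1 (hspan ▸ Submodule.mem_top : w ∈ _)
  exact (h a b).trans_eq (one_mul _).symm

theorem norm_sq_sub_norm_apply_sq_of_eigenvectors {E : Type*} [NormedAddCommGroup E]
    [InnerProductSpace ℂ E] {u v : E} (hu : ‖u‖ = 1) (hv : ‖v‖ = 1) {x y : ℂ} {T : E →L[ℂ] E}
    (hTu : T u = x • u) (hTv : T v = y • v) (a b : ℂ) :
    ‖a • u + b • v‖ ^ 2 - ‖T (a • u + b • v)‖ ^ 2 = (1 - ‖x‖ ^ 2) * ‖a‖ ^ 2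
      + (1 - ‖y‖ ^ 2) * ‖b‖ ^ 2 + 2 * (conj a * b * (inner ℂ u v * (1 - conj x * y))).re := by
  rw [map_add, map_smul, map_smul, hTu, hTv, smul_smul, smul_smul,
    InnerProductSpace.norm_smul_add_smul_sq, InnerProductSpace.norm_smul_add_smul_sq, hu, hv,
    norm_mul, norm_mul, map_mul]
  have hre : (conj a * b * (inner ℂ u v * (1 - conj x * y))).re
      = (conj a * b * inner ℂ u v).re - (conj a * conj x * (b * y) * inner ℂ u v).re := by
    rw [← Complex.sub_re]
    ring_nf
  rw [hre]
  ring

/-- For a diagonalizable operator `T` on a 2-dimensional Hilbert space with unit eigenvectors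
`u₁, u₂` and eigenvalues `x, y ∈ 𝔻`: `‖T‖ ≤ 1` iff `|⟨u₁,u₂⟩|² ≤ 1 − ρ(x,y)²`, where `ρ` is
the pseudohyperbolic distance. -/
theorem stmt_13 {H : Type} [NormedAddCommGroup H] [InnerProductSpace ℂ H]
    (hdim : Module.finrank ℂ H = 2)
    (u₁ u₂ : H) (hu₁ : ‖u₁‖ = 1) (hu₂ : ‖u₂‖ = 1)
    (hind : LinearIndependent ℂ ![u₁, u₂])
    (x y : ℂ) (hx : ‖x‖ < 1) (hy : ‖y‖ < 1)
    (T : H →L[ℂ] H) (hT₁ : T u₁ = x • u₁) (hT₂ : T u₂ = y • u₂) :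
    ‖T‖ ≤ 1 ↔
      ‖(inner ℂ u₁ u₂ : ℂ)‖ ^ 2 ≤ 1 - (‖x - y‖ / ‖1 - (starRingEnd ℂ) y * x‖) ^ 2 := by
  have hspan : Submodule.span ℂ {u₁, u₂} = ⊤ := by
    rw [← Matrix.range_cons_cons_empty u₁ u₂ ![]]
    exact hind.span_eq_top_of_card_eq_finrank (by simp [hdim])
  have hA : 0 < 1 - ‖x‖ ^ 2 := by nlinarith [norm_nonneg x]
  have hB : 0 < 1 - ‖y‖ ^ 2 := by nlinarith [norm_nonneg y]
  have hD : 0 < ‖1 - conj y * x‖ ^ 2 := by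
    nlinarith [Complex.norm_one_sub_conj_mul_sq_sub_norm_sub_sq x y, sq_nonneg ‖x - y‖]
  have hD' : ‖1 - conj x * y‖ = ‖1 - conj y * x‖ := by
    rw [← Complex.norm_conj]
    simp [mul_comm]
  calc ‖T‖ ≤ 1 ↔ ∀ a b : ℂ, ‖T (a • u₁ + b • u₂)‖ ≤ ‖a • u₁ + b • u₂‖ :=
        T.opNorm_le_one_iff_of_span_pair hspan
    _ ↔ ∀ a b : ℂ, 0 ≤ (1 - ‖x‖ ^ 2) * ‖a‖ ^ 2 + (1 - ‖y‖ ^ 2) * ‖b‖ ^ 2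
          + 2 * (conj a * b * (inner ℂ u₁ u₂ * (1 - conj x * y))).re := by
        refine forall₂_congr fun a b ↦ ?_
        rw [← norm_sq_sub_norm_apply_sq_of_eigenvectors hu₁ hu₂ hT₁ hT₂, sub_nonneg,
          sq_le_sq₀ (norm_nonneg _) (norm_nonneg _)]
    _ ↔ ‖inner ℂ u₁ u₂ * (1 - conj x * y)‖ ^ 2 ≤ (1 - ‖x‖ ^ 2) * (1 - ‖y‖ ^ 2) :=
        Complex.forall_hermitianForm_nonneg_iff hB _
    _ ↔ _ := by
        rw [Complex.one_sub_norm_sub_div_sq x y (by simpa using hD.ne'), le_div_iff₀ hD, norm_mul,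
          mul_pow, hD']
end

section
/- For points x = (s₁, p₁) and y = (s₂, p₂) in the symmetrised bidisc G and ω on the unit circle, the pseudohyperbolic distance satisfies ρ(Φ_ω(x), Φ_ω(y)) = |((s₂p₁ − s₁p₂)ω² + 2(p₂ − p₁)ω + s₁ − s₂) / ((s₁ − conj(s₂)p₁)ω² − 2(1 − p₁·conj(p₂))ω + conj(s₂) − s₁·conj(p₂))|. -/
/-!
Write `Φ_ω(s, p) = A / B` with `A = 2ωp - s` and `B = 2 - ωs`; `B ≠ 0` on `G` since `|s| < 2`.
In these homogeneous coordinates `ρ(a/b, c/d) = |ad - bc| / |conj d · b - conj c · a|`, and for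
`Φ_ω` the two cross terms are polynomial in the data: `A₁B₂ - B₁A₂ = -2N` exactly, while
`conj B₂ · B₁ - conj A₂ · A₁ = -2 conj ω · D` once `ω conj ω = 1` is used, where `N / D` is the
claimed quotient.
-/

open ComplexConjugate

lemma norm_fst_lt_two_of_mem_symBidisc {s p : ℂ} (h : (s, p) ∈ symBidisc) : ‖s‖ < 2 := by
  obtain ⟨z, w, hz, hw, hzw⟩ := h
  obtain rfl : s = z + w := congrArg Prod.fst hzw
  linarith [norm_add_le z w]

lemma two_sub_mul_ne_zero_of_mem_symBidisc {s p ω : ℂ} (h : (s, p) ∈ symBidisc)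
    (hω : ‖ω‖ = 1) : 2 - ω * s ≠ 0 := by
  intro h0
  have h2 : ‖(2 : ℂ)‖ = ‖ω * s‖ := by rw [sub_eq_zero.mp h0]
  rw [norm_mul, hω, one_mul, Complex.norm_two] at h2
  linarith [norm_fst_lt_two_of_mem_symBidisc h]

lemma pseudohyperbolic_div_div (a b c d : ℂ) (hb : b ≠ 0) (hd : d ≠ 0) :
    ‖a / b - c / d‖ / ‖1 - conj (c / d) * (a / b)‖ =
      ‖a * d - b * c‖ / ‖conj d * b - conj c * a‖ := by
  have hd' : conj d ≠ 0 := (map_ne_zero _).mpr hd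
  have hsub : a / b - c / d = (a * d - b * c) / (b * d) := div_sub_div a c hb hd
  have hone : 1 - conj (c / d) * (a / b) = (conj d * b - conj c * a) / (conj d * b) := by
    rw [map_div₀]; field_simp
  have hnorm : ‖conj d * b‖ = ‖b * d‖ := by rw [norm_mul, norm_mul, Complex.norm_conj, mul_comm]
  rw [hsub, hone, norm_div, norm_div, hnorm, div_div_div_cancel_right₀]
  exact norm_ne_zero_iff.mpr (mul_ne_zero hb hd)

/-- Explicit formula for the pseudohyperbolic distance `ρ(Φ_ω x, Φ_ω y)` for
`x = (s₁,p₁), y = (s₂,p₂) ∈ G` and unimodular `ω`. -/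
theorem stmt_14 (s₁ p₁ s₂ p₂ ω : ℂ)
    (hx : (s₁, p₁) ∈ symBidisc) (hy : (s₂, p₂) ∈ symBidisc) (hω : ‖ω‖ = 1) :
    ‖(2 * ω * p₁ - s₁) / (2 - ω * s₁) - (2 * ω * p₂ - s₂) / (2 - ω * s₂)‖ /
      ‖1 - (starRingEnd ℂ) ((2 * ω * p₂ - s₂) / (2 - ω * s₂)) *
        ((2 * ω * p₁ - s₁) / (2 - ω * s₁))‖ =
    ‖((s₂ * p₁ - s₁ * p₂) * ω ^ 2 + 2 * (p₂ - p₁) * ω + s₁ - s₂) /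
      ((s₁ - (starRingEnd ℂ) s₂ * p₁) * ω ^ 2 - 2 * (1 - p₁ * (starRingEnd ℂ) p₂) * ω +
        (starRingEnd ℂ) s₂ - s₁ * (starRingEnd ℂ) p₂)‖ := by
  set N := (s₂ * p₁ - s₁ * p₂) * ω ^ 2 + 2 * (p₂ - p₁) * ω + s₁ - s₂
  set D := (s₁ - conj s₂ * p₁) * ω ^ 2 - 2 * (1 - p₁ * conj p₂) * ω + conj s₂ - s₁ * conj p₂
  have hωω : ω * conj ω = 1 := by
    rw [Complex.mul_conj, Complex.normSq_eq_norm_sq, hω]; norm_num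
  have hN : (2 * ω * p₁ - s₁) * (2 - ω * s₂) - (2 - ω * s₁) * (2 * ω * p₂ - s₂) = -2 * N := by
    ring
  have hD : ω * (conj (2 - ω * s₂) * (2 - ω * s₁) - conj (2 * ω * p₂ - s₂) * (2 * ω * p₁ - s₁))
      = -2 * D := by
    simp only [map_sub, map_mul, map_ofNat]
    linear_combination (ω * s₁ * conj s₂ - 2 * conj s₂ - 4 * ω * p₁ * conj p₂
      + 2 * s₁ * conj p₂) * hωω
  have hD' := congrArg norm hD
  rw [norm_mul, hω, one_mul] at hD'
  rw [pseudohyperbolic_div_div _ _ _ _ (two_sub_mul_ne_zero_of_mem_symBidisc hx hω)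
    (two_sub_mul_ne_zero_of_mem_symBidisc hy hω), hN, hD', norm_div, norm_mul, norm_mul,
    mul_div_mul_left _ _ (by norm_num)]
end

section
/- Let m ∈ Aut(𝔻) and suppose the induced map τ(m) on G (given by τ(m)(z+w, zw) = (m(z)+m(w), m(z)m(w))) is an involution fixing (0,0). Then either τ(m) is the identity on G, or τ(m)(s,p) = (−s, p) for all (s,p) ∈ G. In particular (0,0) is not an isolated fixed point of any involutive automorphism of G of the form τ(m). -/
/-- If `τ(m)` is an involution of `G` fixing `(0,0)`, then `τ(m)` is the identity or
`τ(m)(s,p) = (−s,p)`; in particular `(0,0)` is not an isolated fixed point of `τ(m)`. -/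
theorem stmt_15 (m : ℂ → ℂ) (hm : IsMobius m)
    (hfix : (m 0 + m 0, m 0 * m 0) = ((0 : ℂ), (0 : ℂ)))
    (hinv : ∀ z w : ℂ, ‖z‖ < 1 → ‖w‖ < 1 →
      (m (m z) + m (m w), m (m z) * m (m w)) = (z + w, z * w)) :
    ((∀ z w : ℂ, ‖z‖ < 1 → ‖w‖ < 1 → (m z + m w, m z * m w) = (z + w, z * w)) ∨
      (∀ z w : ℂ, ‖z‖ < 1 → ‖w‖ < 1 → (m z + m w, m z * m w) = (-(z + w), z * w))) ∧
    ∀ ε : ℝ, 0 < ε → ∃ z w : ℂ, ‖z‖ < 1 ∧ ‖w‖ < 1 ∧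
      (z + w, z * w) ≠ ((0 : ℂ), (0 : ℂ)) ∧ ‖z + w‖ + ‖z * w‖ < ε ∧
      (m z + m w, m z * m w) = (z + w, z * w) := by

  obtain ⟨ω, a, hω, ha, hmeq⟩ := hm
  have hωne : ω ≠ 0 := by
    intro h; rw [h, norm_zero] at hω; norm_num at hω
  have h0 : m 0 = 0 := by
    have h1 : m 0 + m 0 = 0 := congrArg Prod.fst hfix
    exact add_self_eq_zero.mp h1
  have ha0 : a = 0 := by
    have h := hmeq 0 (by norm_num)
    rw [h0] at h
    simp at h
    tauto
  have hlin : ∀ l : ℂ, ‖l‖ < 1 → m l = ω * l := by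
    intro l hl
    have := hmeq l hl
    rw [ha0] at this
    simpa using this
  have hhalf : ‖(1/2 : ℂ)‖ < 1 := by norm_num
  have hm5 : m (1/2) = ω * (1/2) := hlin _ hhalf
  have hn : ‖ω * (1/2 : ℂ)‖ < 1 := by rw [norm_mul, hω, one_mul]; norm_num
  have hω2 : ω * ω = 1 := by
    have h2 : m (m (1/2)) = ω * (ω * (1/2)) := by rw [hm5, hlin _ hn]
    have h3 := congrArg Prod.fst (hinv (1/2) 0 hhalf (by norm_num))
    simp only [h0] at h3
    rw [h2] at h3
    simp at h3
    linear_combination 2 * h3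
  have hcase : ω = 1 ∨ ω = -1 := mul_self_eq_one_iff.mp hω2
  constructor
  · rcases hcase with h | h
    · left; intro z w hz hw
      rw [hlin z hz, hlin w hw, h]; simp
    · right; intro z w hz hw
      rw [hlin z hz, hlin w hw, h]
      rw [Prod.mk.injEq]; constructor <;> ring
  · intro ε hε
    set t : ℝ := min ε 1 / 2 with ht
    have ht0 : 0 < t := by positivity
    have ht1 : t ≤ 1/2 := by
      have : min ε 1 ≤ 1 := min_le_right _ _
      simp [ht]; linarith
    have htε : t ≤ ε / 2 := by
      have : min ε 1 ≤ ε := min_le_left _ _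
      simp [ht]; linarith
    refine ⟨(t : ℂ), (-(t : ℂ)), ?_, ?_, ?_, ?_, ?_⟩
    · simp [abs_of_pos ht0]; linarith
    · simp [abs_of_pos ht0]; linarith
    · intro h
      have h2 := congrArg Prod.snd h
      simp at h2
      linarith
    · have he : (t : ℂ) + (-(t : ℂ)) = 0 := by ring
      rw [he]
      simp [abs_of_pos ht0]
      nlinarith
    · have hzn : ‖(t : ℂ)‖ < 1 := by simp [abs_of_pos ht0]; linarith
      have hwn : ‖(-(t : ℂ))‖ < 1 := by simp [abs_of_pos ht0]; linarith
      rw [hlin _ hzn, hlin _ hwn, Prod.mk.injEq]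
      constructor
      · ring
      · linear_combination (-(t:ℂ) * (t:ℂ)) * hω2
end
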